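/- Bregman distance control for the Bregman extrapolation method at zeros of F: suppose ω : ℝ^d → ℝ is strongly convex with modulus μ > 0, F is λ-relatively Lipschitz with respect to ω and monotone, u_0 = u_{−1}, α_k β_k = α_{k−1} and λ(α_k + α_{k−1}) ≤ 1 for all k, and ū satisfies F(ū) = 0. Then for every t ≥ 1: (1 − λα_{t−1}) D_ω^{u_t*}(ū, u_t) ≤ D_ω^{u_0*}(ū, u_0). -/
import Mathlib

open scoped RealInnerProductSpace

/-- `vs` is a subgradient of `ω` at `v`. -/
def IsSubgrad {d : ℕ} (ω : EuclideanSpace ℝ (Fin d) → ℝ)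
    (v vs : EuclideanSpace ℝ (Fin d)) : Prop :=
  ∀ w, ω v + ⟪vs, w - v⟫ ≤ ω w

/-- The Bregman distance `D_ω^{vs}(u, v) = ω(u) − ω(v) − ⟨vs, u − v⟩`. -/
noncomputable def breg {d : ℕ} (ω : EuclideanSpace ℝ (Fin d) → ℝ)
    (vs u v : EuclideanSpace ℝ (Fin d)) : ℝ :=
  ω u - ω v - ⟪vs, u - v⟫

/-- `F` is `lam`-relatively Lipschitz with respect to `ω`. -/
def RelLip {d : ℕ} (lam : ℝ)
    (F : EuclideanSpace ℝ (Fin d) → EuclideanSpace ℝ (Fin d))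
    (ω : EuclideanSpace ℝ (Fin d) → ℝ) : Prop :=
  ∀ u v z us vs, IsSubgrad ω u us → IsSubgrad ω v vs →
    ⟪F v - F u, v - z⟫ ≤ lam * (breg ω us v u + breg ω vs z v)

lemma breg_nonneg {d : ℕ} {ω : EuclideanSpace ℝ (Fin d) → ℝ}
    {v vs : EuclideanSpace ℝ (Fin d)} (h : IsSubgrad ω v vs)
    (w : EuclideanSpace ℝ (Fin d)) : 0 ≤ breg ω vs w v := by
  have := h w
  simp only [breg]
  linarith

lemma breg_self {d : ℕ} (ω : EuclideanSpace ℝ (Fin d) → ℝ)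
    (vs v : EuclideanSpace ℝ (Fin d)) : breg ω vs v v = 0 := by
  simp [breg]

lemma step_identity {d : ℕ} (ω : EuclideanSpace ℝ (Fin d) → ℝ)
    (F : EuclideanSpace ℝ (Fin d) → EuclideanSpace ℝ (Fin d))
    (ub ukm uk uk1 usk : EuclideanSpace ℝ (Fin d)) (ak akm : ℝ) :
    breg ω (usk - ak • F uk - akm • (F uk - F ukm)) ub uk1
      - ak * ⟪F uk1 - F uk, uk1 - ub⟫
    = breg ω usk ub uk - akm * ⟪F uk - F ukm, uk - ub⟫
      - breg ω usk uk1 uk - ak * ⟪F uk1, uk1 - ub⟫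
      - akm * ⟪F uk - F ukm, uk1 - uk⟫ := by
  simp only [breg, inner_sub_left, inner_sub_right, real_inner_smul_left]
  ring

/-- **Bregman distance control for the Bregman extrapolation method at zeros of `F`.** -/
theorem bep_bregman_control {d : ℕ} (μ lam : ℝ) (hμ : 0 < μ)
    (ω : EuclideanSpace ℝ (Fin d) → ℝ) (hω : StrongConvexOn Set.univ μ ω)
    (F : EuclideanSpace ℝ (Fin d) → EuclideanSpace ℝ (Fin d))
    (hF : RelLip lam F ω)
    (hmono : ∀ u v, 0 ≤ ⟪F u - F v, u - v⟫)
    (α β : ℤ → ℝ)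
    (hα : ∀ k : ℤ, 0 ≤ k → 0 < α k)
    (hβ : ∀ k : ℤ, 0 ≤ k → 0 ≤ β k)
    (heq : ∀ k : ℤ, 0 ≤ k → α k * β k = α (k - 1))
    (hcond : ∀ k : ℤ, 0 ≤ k → lam * (α k + α (k - 1)) ≤ 1)
    (u us : ℤ → EuclideanSpace ℝ (Fin d))
    (hinit : u 0 = u (-1))
    (hsub : ∀ k : ℤ, 0 ≤ k → IsSubgrad ω (u k) (us k))
    (hupd : ∀ k : ℤ, 0 ≤ k →
      us (k + 1) = us k - α k • F (u k) - (α k * β k) • (F (u k) - F (u (k - 1))))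
    (ub : EuclideanSpace ℝ (Fin d)) (hub : F ub = 0)
    (t : ℕ) (ht : 1 ≤ t) :
    (1 - lam * α ((t : ℤ) - 1)) * breg ω (us t) ub (u t)
      ≤ breg ω (us 0) ub (u 0) := by
  have ht' : (0 : ℤ) ≤ (t : ℤ) := by positivity
  have hDt : 0 ≤ breg ω (us t) ub (u t) := breg_nonneg (hsub t ht') ub
  by_cases hD0 : breg ω (us t) ub (u t) = 0
  · rw [hD0, mul_zero]
    exact breg_nonneg (hsub 0 le_rfl) ub
  -- from positivity of the Bregman distance at `t`, `lam` is nonnegative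
  have hlam : 0 ≤ lam := by
    have h := hF (u t) (u t) ub (us t) (us t) (hsub t ht') (hsub t ht')
    rw [sub_self, breg_self] at h
    simp only [inner_zero_left, zero_add] at h
    nlinarith [lt_of_le_of_ne hDt (Ne.symm hD0)]
  -- the per-step identity
  have hident : ∀ k : ℤ, 0 ≤ k →
      breg ω (us (k + 1)) ub (u (k + 1))
        - α k * ⟪F (u (k + 1)) - F (u k), u (k + 1) - ub⟫
      = breg ω (us k) ub (u k) - α (k - 1) * ⟪F (u k) - F (u (k - 1)), u k - ub⟫
        - breg ω (us k) (u (k + 1)) (u k)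
        - α k * ⟪F (u (k + 1)), u (k + 1) - ub⟫
        - α (k - 1) * ⟪F (u k) - F (u (k - 1)), u (k + 1) - u k⟫ := by
    intro k hk
    have hus : us (k + 1) = us k - α k • F (u k) - α (k - 1) • (F (u k) - F (u (k - 1))) := by
      rw [hupd k hk, heq k hk]
    rw [hus]
    exact step_identity ω F ub (u (k - 1)) (u k) (u (k + 1)) (us k) (α k) (α (k - 1))
  -- monotonicity term
  have hmono' : ∀ k : ℤ, 0 ≤ k → 0 ≤ α k * ⟪F (u (k + 1)), u (k + 1) - ub⟫ := by
    intro k hk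
    have h := hmono (u (k + 1)) ub
    rw [hub, sub_zero] at h
    exact mul_nonneg (hα k hk).le h
  -- the key induction
  have key : ∀ n : ℕ, 1 ≤ n →
      breg ω (us n) ub (u n)
        - α ((n : ℤ) - 1) * ⟪F (u n) - F (u ((n : ℤ) - 1)), u n - ub⟫
        + lam * (α ((n : ℤ) - 1) * breg ω (us ((n : ℤ) - 1)) (u n) (u ((n : ℤ) - 1)))
      ≤ breg ω (us 0) ub (u 0) := by
    intro n hn
    induction n, hn using Nat.le_induction with
    | base =>
      have h := hident 0 le_rfl
      have hz : (0 : ℤ) - 1 = -1 := by norm_num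
      rw [hz, ← hinit, sub_self] at h
      simp only [inner_zero_left, mul_zero, sub_zero] at h
      have hB0 : 0 ≤ breg ω (us 0) (u (0 + 1)) (u 0) := breg_nonneg (hsub 0 le_rfl) _
      have hM0 := hmono' 0 le_rfl
      have hc := hcond 0 le_rfl
      have hαm : 0 ≤ α ((0 : ℤ) - 1) := by
        rw [← heq 0 le_rfl]
        exact mul_nonneg (hα 0 le_rfl).le (hβ 0 le_rfl)
      have hla : lam * α 0 ≤ 1 := by nlinarith
      have hcast1 : ((1 : ℕ) : ℤ) = 0 + 1 := by norm_num
      have hcast2 : ((1 : ℕ) : ℤ) - 1 = 0 := by norm_num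
      rw [hcast2, hcast1]
      nlinarith
    | succ n hn ih =>
      have hn0 : (0 : ℤ) ≤ (n : ℤ) := by positivity
      have hn1 : (0 : ℤ) ≤ (n : ℤ) - 1 := by
        have : (1 : ℤ) ≤ (n : ℤ) := by exact_mod_cast hn
        linarith
      have h := hident n hn0
      -- relative Lipschitz bound on the extrapolation term
      have hlip := hF (u ((n : ℤ) - 1)) (u n) (u ((n : ℤ) + 1)) (us ((n : ℤ) - 1)) (us n)
        (hsub _ hn1) (hsub _ hn0)
      have hαm : 0 ≤ α ((n : ℤ) - 1) := (hα _ hn1).le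
      have h1 := mul_le_mul_of_nonneg_left hlip hαm
      have hflip : ⟪F (u (n : ℤ)) - F (u ((n : ℤ) - 1)), u (n : ℤ) - u ((n : ℤ) + 1)⟫
          = -⟪F (u (n : ℤ)) - F (u ((n : ℤ) - 1)), u ((n : ℤ) + 1) - u (n : ℤ)⟫ := by
        rw [← inner_neg_right, neg_sub]
      rw [hflip] at h1
      have hBn : 0 ≤ breg ω (us n) (u ((n : ℤ) + 1)) (u n) := breg_nonneg (hsub _ hn0) _
      have hMn := hmono' n hn0
      have hc := hcond n hn0
      have hcoef : 0 ≤ (1 - lam * (α n + α ((n : ℤ) - 1))) * breg ω (us n) (u ((n : ℤ) + 1)) (u n) :=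
        mul_nonneg (by linarith) hBn
      have hcast1 : ((n + 1 : ℕ) : ℤ) = (n : ℤ) + 1 := by push_cast; ring
      have hcast2 : ((n + 1 : ℕ) : ℤ) - 1 = (n : ℤ) := by push_cast; ring
      rw [hcast1]
      simp only [add_sub_cancel_right]
      nlinarith
  -- conclude
  have hkey := key t ht
  have ht1 : (0 : ℤ) ≤ (t : ℤ) - 1 := by
    have : (1 : ℤ) ≤ (t : ℤ) := by exact_mod_cast ht
    linarith
  have hlip := hF (u ((t : ℤ) - 1)) (u t) ub (us ((t : ℤ) - 1)) (us t)
    (hsub _ ht1) (hsub _ ht')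
  have hαm : 0 ≤ α ((t : ℤ) - 1) := (hα _ ht1).le
  have h2 := mul_le_mul_of_nonneg_left hlip hαm
  nlinarith [breg_nonneg (hsub _ ht1) (u t)]
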